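/- Let ⟨A,m⟩ be a monotonic distributive semilattice. Then: (1) m1 = 1 iff ∅ ∉ R_m(P) for every irreducible filter P; (2) for all a, ma ≤ a iff for every irreducible filter P, the special saturated set α(Pᶜ) = {Q ∈ X(A) : Q ∩ Pᶜ = ∅} belongs to R_m(P); (3) for all a, a ≤ ma iff for every irreducible filter P and every Z ∈ R_m(P), P ∈ Z. -/

import Mathlib

namespace DS

variable {A : Type*} [SemilatticeInf A] [OrderTop A]

/-- A filter: an upset containing the top element, closed under meets. -/
def IsFilt (F : Set A) : Prop :=
  IsUpperSet F ∧ ⊤ ∈ F ∧ ∀ ⦃a b : A⦄, a ∈ F → b ∈ F → a ⊓ b ∈ F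

/-- An irreducible (prime) filter: a proper filter that is meet-irreducible
among filters. -/
def IsIrred (F : Set A) : Prop :=
  IsFilt F ∧ F ≠ Set.univ ∧
    ∀ F₁ F₂ : Set A, IsFilt F₁ → IsFilt F₂ → F = F₁ ∩ F₂ → F = F₁ ∨ F = F₂

/-- An order ideal: a downset in which every pair of elements has an upper
bound in the set. -/
def IsOrdIdeal (I : Set A) : Prop :=
  IsLowerSet I ∧ ∀ a ∈ I, ∀ b ∈ I, ∃ c ∈ I, a ≤ c ∧ b ≤ c

/-- Distributivity for a meet-semilattice with top. -/
def IsDistrib (A : Type*) [SemilatticeInf A] [OrderTop A] : Prop :=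
  ∀ a b c : A, a ⊓ b ≤ c → ∃ a₁ b₁ : A, a ≤ a₁ ∧ b ≤ b₁ ∧ c = a₁ ⊓ b₁

/-- The set of irreducible filters of `A`, ordered by inclusion. -/
def Spec (A : Type*) [SemilatticeInf A] [OrderTop A] : Type _ :=
  {P : Set A // IsIrred P}

instance : PartialOrder (Spec A) := Subtype.partialOrder _

/-- `beta a` = the set of irreducible filters containing `a`. -/
def beta (a : A) : Set (Spec A) := {P : Spec A | a ∈ P.1}

/-- The topology on `Spec A` generated by the basis `{beta aᶜ : a ∈ A}`. -/
def specTop (A : Type*) [SemilatticeInf A] [OrderTop A] : TopologicalSpace (Spec A) :=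
  TopologicalSpace.generateFrom {s : Set (Spec A) | ∃ a : A, s = (beta a)ᶜ}

/-- Special basic saturated subsets: intersections of dually directed families
of basic opens `beta aᶜ`. -/
def SBS (Z : Set (Spec A)) : Prop :=
  ∃ L : Set A, (∀ a ∈ L, ∀ b ∈ L, ∃ c ∈ L, beta a ∪ beta b ⊆ beta c) ∧
    Z = ⋂ a ∈ L, (beta a)ᶜ

/-- The order ideal associated to a special basic saturated set. -/
def IA (Z : Set (Spec A)) : Set A := {a : A | beta a ∩ Z = ∅}

/-- The special basic saturated set associated to an order ideal. -/
def alphaI (I : Set A) : Set (Spec A) := {P : Spec A | P.1 ∩ I = ∅}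

/-- The filter associated to a closed set. -/
def FY (Y : Set (Spec A)) : Set A := {a : A | Y ⊆ beta a}

/-- The multirelation `R_m` on the dual space. -/
def Rm (m : A → A) (P : Spec A) (Z : Set (Spec A)) : Prop :=
  {a : A | m a ∈ P.1} ∩ IA Z = ∅

/-- The multirelation `G_m` on the dual space. -/
def Gm (m : A → A) (P : Spec A) (Y : Set (Spec A)) : Prop :=
  FY Y ⊆ {a : A | m a ∈ P.1}

/-- The composed relation `R_m²`. -/
def Rm2 (m : A → A) (P : Spec A) (Z : Set (Spec A)) : Prop :=
  ∃ S : Set (Spec A), SBS S ∧ Rm m P S ∧ ∀ x ∈ S, Rm m x Z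

end DS

open DS Set

/-! Everything rests on the separation property of the dual space: in a distributive
meet-semilattice, `a ≤ b` iff every irreducible filter containing `a` contains `b`
(the prime filter theorem, via Zorn's lemma). For the three special choices of `Z`
(`∅`, `α(Pᶜ)` and `(beta a)ᶜ`) the ideal `IA Z` is computed explicitly, so each condition
on `R_m(P)` becomes an implication `b ∈ P → c ∈ P` holding for all irreducible `P`.
For general special basic saturated `Z` in (3), `P ∈ Z` as soon as `P` misses `IA Z`. -/

namespace DS

lemma isOrdIdeal_Iic {A : Type*} [SemilatticeInf A] (a : A) : IsOrdIdeal (Iic a) :=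
  ⟨fun _ _ hyx hx => hyx.trans hx, fun _ hx _ hy => ⟨a, le_rfl, hx, hy⟩⟩

variable {A : Type*} [SemilatticeInf A] [OrderTop A]

lemma isFilt_Ici (a : A) : IsFilt (Ici a) :=
  ⟨fun _ _ hxy hx => hx.trans hxy, le_top, fun _ _ hx hy => le_inf hx hy⟩

lemma isFilt_sUnion_of_isChain {c : Set (Set A)} (hc : ∀ G ∈ c, IsFilt G)
    (hchain : IsChain (· ⊆ ·) c) (hne : c.Nonempty) : IsFilt (⋃₀ c) := by
  obtain ⟨G₀, hG₀⟩ := hne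
  refine ⟨?_, ⟨G₀, hG₀, (hc G₀ hG₀).2.1⟩, ?_⟩
  · rintro x y hxy ⟨G, hG, hx⟩
    exact ⟨G, hG, (hc G hG).1 hxy hx⟩
  · rintro x y ⟨G₁, hG₁, hx⟩ ⟨G₂, hG₂, hy⟩
    rcases hchain.total hG₁ hG₂ with h | h
    · exact ⟨G₂, hG₂, (hc G₂ hG₂).2.2 (h hx) hy⟩
    · exact ⟨G₁, hG₁, (hc G₁ hG₁).2.2 hx (h hy)⟩

lemma IsFilt.adjoin {P : Set A} (hP : IsFilt P) (a : A) :
    IsFilt {x | ∃ p ∈ P, p ⊓ a ≤ x} := by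
  refine ⟨?_, ⟨⊤, hP.2.1, le_top⟩, ?_⟩
  · rintro x y hxy ⟨p, hp, hpx⟩
    exact ⟨p, hp, hpx.trans hxy⟩
  · rintro x y ⟨p, hp, hpx⟩ ⟨q, hq, hqy⟩
    exact ⟨p ⊓ q, hP.2.2 hp hq, le_inf ((inf_le_inf_right a inf_le_left).trans hpx)
      ((inf_le_inf_right a inf_le_right).trans hqy)⟩

lemma exists_inf_le_of_maximal_disjoint {P I : Set A} (hP : IsFilt P)
    (hmax : ∀ G, IsFilt G → P ⊆ G → Disjoint G I → G ⊆ P) {a : A} (ha : a ∉ P) :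
    ∃ p ∈ P, ∃ c ∈ I, p ⊓ a ≤ c := by
  by_contra! h
  have hdisj : Disjoint {x | ∃ p ∈ P, p ⊓ a ≤ x} I :=
    disjoint_left.2 fun x ⟨p, hp, hpx⟩ hx => h p hp x hx hpx
  exact ha <| hmax _ (hP.adjoin a) (fun x hx => ⟨x, hx, inf_le_left⟩) hdisj
    ⟨⊤, hP.2.1, inf_le_right⟩

/-- Split `c = f ⊓ a'` with `p ≤ f` and `a₁ ≤ a'`; splitting `a'` once more puts it in `F₂`. -/
lemma IsDistrib.mem_inter_of_inf_le (hA : IsDistrib A) {F₁ F₂ : Set A}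
    (hF₁ : IsFilt F₁) (hF₂ : IsFilt F₂) {p a₁ a₂ c : A} (hp : p ∈ F₁ ∩ F₂)
    (ha₁ : a₁ ∈ F₁) (ha₂ : a₂ ∈ F₂) (h₁ : p ⊓ a₁ ≤ c) (h₂ : p ⊓ a₂ ≤ c) :
    c ∈ F₁ ∩ F₂ := by
  obtain ⟨f, a', hpf, ha₁a', rfl⟩ := hA p a₁ c h₁
  obtain ⟨f', a'', hpf', ha₂a'', ha'⟩ := hA p a₂ a' (h₂.trans inf_le_right)
  have hf : f ∈ F₁ ∩ F₂ := ⟨hF₁.1 hpf hp.1, hF₂.1 hpf hp.2⟩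
  have ha'₁ : a' ∈ F₁ := hF₁.1 ha₁a' ha₁
  have ha'₂ : a' ∈ F₂ := ha' ▸ hF₂.2.2 (hF₂.1 hpf' hp.2) (hF₂.1 ha₂a'' ha₂)
  exact ⟨hF₁.2.2 hf.1 ha'₁, hF₂.2.2 hf.2 ha'₂⟩

lemma isIrred_of_maximal_disjoint (hA : IsDistrib A) {P I : Set A} (hP : IsFilt P)
    (hI : IsOrdIdeal I) (hIne : I.Nonempty) (hPI : Disjoint P I)
    (hmax : ∀ G, IsFilt G → P ⊆ G → Disjoint G I → G ⊆ P) : IsIrred P := by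
  refine ⟨hP, fun hP' => ?_, fun F₁ F₂ hF₁ hF₂ hPF => ?_⟩
  · obtain ⟨b, hb⟩ := hIne
    exact disjoint_left.1 hPI (hP' ▸ mem_univ b) hb
  by_contra! hne
  obtain ⟨a₁, ha₁, ha₁P⟩ : (F₁ \ P).Nonempty :=
    sdiff_nonempty.2 fun h => hne.1 (h.antisymm (hPF ▸ inter_subset_left)).symm
  obtain ⟨a₂, ha₂, ha₂P⟩ : (F₂ \ P).Nonempty :=
    sdiff_nonempty.2 fun h => hne.2 (h.antisymm (hPF ▸ inter_subset_right)).symm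
  obtain ⟨p₁, hp₁, c₁, hc₁, h₁⟩ := exists_inf_le_of_maximal_disjoint hP hmax ha₁P
  obtain ⟨p₂, hp₂, c₂, hc₂, h₂⟩ := exists_inf_le_of_maximal_disjoint hP hmax ha₂P
  obtain ⟨c, hc, hc₁c, hc₂c⟩ := hI.2 c₁ hc₁ c₂ hc₂
  have hp : p₁ ⊓ p₂ ∈ F₁ ∩ F₂ := hPF ▸ hP.2.2 hp₁ hp₂
  have hcP : c ∈ P := hPF ▸ hA.mem_inter_of_inf_le hF₁ hF₂ hp ha₁ ha₂
    (((inf_le_inf_right a₁ inf_le_left).trans h₁).trans hc₁c)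
    (((inf_le_inf_right a₂ inf_le_right).trans h₂).trans hc₂c)
  exact disjoint_left.1 hPI hcP hc

/-- The prime filter theorem for distributive meet-semilattices. -/
lemma exists_isIrred_superset_disjoint (hA : IsDistrib A) {F I : Set A} (hF : IsFilt F)
    (hI : IsOrdIdeal I) (hIne : I.Nonempty) (hFI : Disjoint F I) :
    ∃ P, IsIrred P ∧ F ⊆ P ∧ Disjoint P I := by
  obtain ⟨P, hFP, hmax⟩ := zorn_subset_nonempty {G | IsFilt G ∧ Disjoint G I}
    (fun c hc hchain hne => ⟨⋃₀ c, ⟨isFilt_sUnion_of_isChain (fun G hG => (hc hG).1) hchain hne,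
      disjoint_sUnion_left.2 fun G hG => (hc hG).2⟩, fun _ => subset_sUnion_of_mem⟩)
    F ⟨hF, hFI⟩
  refine ⟨P, isIrred_of_maximal_disjoint hA hmax.prop.1 hI hIne hmax.prop.2
    fun G hG hPG hGI => hmax.2 ⟨hG, hGI⟩ hPG, hFP, hmax.prop.2⟩

lemma exists_spec_mem_not_mem (hA : IsDistrib A) {a b : A} (h : ¬ a ≤ b) :
    ∃ P : Spec A, a ∈ P.1 ∧ b ∉ P.1 := by
  obtain ⟨P, hP, haP, hPb⟩ := exists_isIrred_superset_disjoint hA (isFilt_Ici a)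
    (isOrdIdeal_Iic b) nonempty_Iic (disjoint_left.2 fun _ hx hxb => h (hx.trans hxb))
  exact ⟨⟨P, hP⟩, haP le_rfl, fun hb => disjoint_left.1 hPb hb le_rfl⟩

lemma beta_subset_beta_iff (hA : IsDistrib A) {a b : A} : beta a ⊆ beta b ↔ a ≤ b := by
  refine ⟨fun h => ?_, fun h P ha => P.2.1.1 h ha⟩
  by_contra hab
  obtain ⟨P, haP, hbP⟩ := exists_spec_mem_not_mem hA hab
  exact hbP (h haP)

lemma IA_empty : IA (∅ : Set (Spec A)) = univ := by
  simp [IA]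

lemma IA_setOf_subset (P : Spec A) : IA {Q : Spec A | Q.1 ⊆ P.1} = P.1ᶜ := by
  ext a
  simp only [IA, mem_compl_iff, mem_ofPred_eq, ← not_nonempty_iff_eq_empty, not_iff_not]
  exact ⟨fun ⟨Q, haQ, hQP⟩ => hQP haQ, fun ha => ⟨P, ha, fun _ hx => hx⟩⟩

lemma IA_compl_beta (hA : IsDistrib A) (a : A) : IA (beta a)ᶜ = Iic a := by
  ext b
  simp only [IA, ← sdiff_eq, sdiff_eq_empty, mem_ofPred_eq, beta_subset_beta_iff hA, mem_Iic]

lemma sbs_compl_beta (a : A) : SBS (beta a)ᶜ :=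
  ⟨{a}, by simp, by simp⟩

/-- A point outside a special basic saturated set is separated from it by a basic open. -/
lemma SBS.mem_of_inter_IA_eq_empty {Z : Set (Spec A)} (hZ : SBS Z) {P : Spec A}
    (hP : P.1 ∩ IA Z = ∅) : P ∈ Z := by
  obtain ⟨L, -, rfl⟩ := hZ
  simp only [mem_iInter, mem_compl_iff]
  intro c hc hcP
  refine (eq_empty_iff_forall_notMem.1 hP) c ⟨hcP, ?_⟩
  exact eq_empty_iff_forall_notMem.2 fun Q ⟨hcQ, hQ⟩ =>
    (mem_iInter₂.1 hQ c hc) hcQ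

lemma rm_iff_forall (m : A → A) (P : Spec A) (Z : Set (Spec A)) :
    Rm m P Z ↔ ∀ a, m a ∈ P.1 → a ∉ IA Z := by
  simp only [Rm, eq_empty_iff_forall_notMem, mem_inter_iff, mem_ofPred_eq, not_and]

lemma map_top_eq_top_iff (hA : IsDistrib A) {m : A → A} (hm : Monotone m) :
    m ⊤ = ⊤ ↔ ∀ P : Spec A, ¬ Rm m P ∅ := by
  have hRm : ∀ P : Spec A, ¬ Rm m P ∅ ↔ m ⊤ ∈ P.1 := fun P => by
    simp only [rm_iff_forall, IA_empty, mem_univ, not_true_eq_false, imp_false, not_forall,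
      not_not]
    exact ⟨fun ⟨a, ha⟩ => P.2.1.1 (hm le_top) ha, fun h => ⟨⊤, h⟩⟩
  simp only [hRm, top_le_iff.symm, ← beta_subset_beta_iff hA]
  exact ⟨fun h P => h P.2.1.2.1, fun h P _ => h P⟩

lemma forall_map_le_iff (hA : IsDistrib A) (m : A → A) :
    (∀ a, m a ≤ a) ↔ ∀ P : Spec A, Rm m P {Q : Spec A | Q.1 ⊆ P.1} := by
  simp only [rm_iff_forall, IA_setOf_subset, mem_compl_iff, not_not, ← beta_subset_beta_iff hA]
  exact ⟨fun h P a ha => h a ha, fun h a P ha => h P a ha⟩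

lemma forall_le_map_iff (hA : IsDistrib A) {m : A → A} (hm : Monotone m) :
    (∀ a, a ≤ m a) ↔ ∀ P : Spec A, ∀ Z, SBS Z → Rm m P Z → P ∈ Z := by
  refine ⟨fun h P Z hZ hPZ => hZ.mem_of_inter_IA_eq_empty ?_, fun h a => ?_⟩
  · exact eq_empty_iff_forall_notMem.2 fun a ⟨haP, haZ⟩ =>
      (rm_iff_forall m P Z).1 hPZ a (P.2.1.1 (h a) haP) haZ
  · rw [← beta_subset_beta_iff hA]
    intro P haP
    by_contra hmaP
    -- `(beta a)ᶜ` is `R_m`-related to `P` as soon as `m a ∉ P`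
    refine h P _ (sbs_compl_beta a) ?_ haP
    rw [rm_iff_forall, IA_compl_beta hA]
    exact fun b hmb hba => hmaP (P.2.1.1 (hm hba) hmb)

end DS

theorem stmt14 {A : Type*} [SemilatticeInf A] [OrderTop A] (hA : IsDistrib A)
    (m : A → A) (hm : ∀ a b : A, a ≤ b → m a ≤ m b) :
    (m ⊤ = ⊤ ↔ ∀ P : Spec A, ¬ Rm m P (∅ : Set (Spec A))) ∧
    ((∀ a : A, m a ≤ a) ↔
      ∀ P : Spec A, Rm m P {Q : Spec A | Q.1 ⊆ P.1}) ∧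
    ((∀ a : A, a ≤ m a) ↔
      ∀ P : Spec A, ∀ Z : Set (Spec A), SBS Z → Rm m P Z → P ∈ Z) :=
  ⟨map_top_eq_top_iff hA (fun _ _ => hm _ _), forall_map_le_iff hA m,
    forall_le_map_iff hA (fun _ _ => hm _ _)⟩
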